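/- arXiv:2211.17259 — 2 statements merged into one kernel-verified Lean document; each statement's English description precedes it below -/
import Mathlib

section
/- Let b, N be positive integers with b ≤ N, and let f be a real polynomial of degree less than N - b. Let B : ℝ[x] → ℝ^b be a linear map (b linear boundary functionals) such that the b×b matrix with columns B(x^0), ..., B(x^{b-1}) is invertible. Then for any g ∈ ℝ^b there exists a unique polynomial u of degree less than N such that the b-th derivative of u equals f and B(u) = g. -/
/-!
The `b`-th derivative kills exactly `Π_b`, on which `B` is injective because its matrix in the
monomial basis is invertible. Hence `u ↦ (∂^b u, B u)` is an injective linear map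
`Π_N → Π_{N-b} × K^b` between spaces of the same dimension `N`, and therefore bijective.
-/

open Polynomial

namespace Polynomial

open Matrix

theorem iterate_derivative_mem_degreeLT {R : Type*} [Semiring R] {u : R[X]} {n : ℕ}
    (hu : u ∈ degreeLT R n) (b : ℕ) : derivative^[b] u ∈ degreeLT R (n - b) := by
  rw [mem_degreeLT, degree_lt_iff_coeff_zero] at hu ⊢
  intro m hm
  rw [coeff_iterate_derivative, hu (m + b) (by omega), smul_zero]

theorem mem_degreeLT_of_iterate_derivative_eq_zero {R : Type*} [Semiring R]
    [IsAddTorsionFree R] {u : R[X]} {b : ℕ} (h : derivative^[b] u = 0) : u ∈ degreeLT R b := by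
  rw [mem_degreeLT, degree_lt_iff_coeff_zero]
  intro m hm
  have hcoeff := coeff_iterate_derivative (k := b) u (m - b)
  rw [h, coeff_zero, Nat.sub_add_cancel hm, eq_comm, smul_eq_zero] at hcoeff
  exact hcoeff.resolve_left (Nat.descFactorial_eq_zero_iff_lt.not.mpr (not_lt.mpr hm))

theorem linearMap_apply_eq_mulVec_degreeLTEquiv {R : Type*} [CommRing R] {b : ℕ}
    (B : R[X] →ₗ[R] (Fin b → R)) (p : degreeLT R b) :
    B p = (Matrix.of fun i j : Fin b => B (X ^ (j : ℕ)) i) *ᵥ degreeLTEquiv R b p := by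
  conv_lhs => rw [← (degreeLTEquiv R b).symm_apply_apply p]
  ext i
  simp [degreeLTEquiv, mulVec, dotProduct, ← smul_X_eq_monomial, mul_comm]

theorem eq_zero_of_mem_degreeLT_of_linearMap_eq_zero {K : Type*} [Field K] {b : ℕ}
    {B : K[X] →ₗ[K] (Fin b → K)}
    (hB : (Matrix.of fun i j : Fin b => B (X ^ (j : ℕ)) i).det ≠ 0)
    {p : K[X]} (hp : p ∈ degreeLT K b) (hBp : B p = 0) : p = 0 := by
  have hcoeff := eq_zero_of_mulVec_eq_zero hB
    ((linearMap_apply_eq_mulVec_degreeLTEquiv B ⟨p, hp⟩).symm.trans hBp)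
  simpa using hcoeff

section BoundaryValueProblem

variable {K : Type*} [Field K] {b N : ℕ} {B : K[X] →ₗ[K] (Fin b → K)}

noncomputable def iterateDerivativeProdBoundary (b N : ℕ) (B : K[X] →ₗ[K] (Fin b → K)) :
    degreeLT K N →ₗ[K] degreeLT K (N - b) × (Fin b → K) :=
  ((derivative ^ b : Module.End K K[X]).restrict fun _ hu => by
      simpa [Module.End.pow_apply] using iterate_derivative_mem_degreeLT hu b).prod
    (B ∘ₗ (degreeLT K N).subtype)

theorem iterateDerivativeProdBoundary_apply_eq_iff {u : degreeLT K N}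
    {f : degreeLT K (N - b)} {g : Fin b → K} :
    iterateDerivativeProdBoundary b N B u = (f, g) ↔
      derivative^[b] (u : K[X]) = f ∧ B u = g := by
  simp [iterateDerivativeProdBoundary, Prod.ext_iff, Subtype.ext_iff, Module.End.pow_apply]

variable [CharZero K]

theorem iterateDerivativeProdBoundary_injective
    (hB : (Matrix.of fun i j : Fin b => B (X ^ (j : ℕ)) i).det ≠ 0) :
    Function.Injective (iterateDerivativeProdBoundary b N B) := by
  rw [← LinearMap.ker_eq_bot, LinearMap.ker_eq_bot']
  intro u hu
  obtain ⟨hderiv, hboundary⟩ :=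
    iterateDerivativeProdBoundary_apply_eq_iff.mp (hu.trans (Prod.mk_zero_zero).symm)
  exact Subtype.ext <| eq_zero_of_mem_degreeLT_of_linearMap_eq_zero hB
    (mem_degreeLT_of_iterate_derivative_eq_zero hderiv) hboundary

theorem iterateDerivativeProdBoundary_bijective (hbN : b ≤ N)
    (hB : (Matrix.of fun i j : Fin b => B (X ^ (j : ℕ)) i).det ≠ 0) :
    Function.Bijective (iterateDerivativeProdBoundary b N B) := by
  have hdim : Module.finrank K (degreeLT K N) =
      Module.finrank K (degreeLT K (N - b) × (Fin b → K)) := by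
    simp only [Module.finrank_prod, (degreeLTEquiv K _).finrank_eq, Module.finrank_fin_fun]
    omega
  have hinj := iterateDerivativeProdBoundary_injective (N := N) hB
  exact ⟨hinj, (LinearMap.injective_iff_surjective_of_finrank_eq_finrank hdim).mp hinj⟩

theorem existsUnique_iterate_derivative_eq_and_eq (hbN : b ≤ N) {f : K[X]}
    (hf : f ∈ degreeLT K (N - b))
    (hB : (Matrix.of fun i j : Fin b => B (X ^ (j : ℕ)) i).det ≠ 0) (g : Fin b → K) :
    ∃! u : K[X], u ∈ degreeLT K N ∧ derivative^[b] u = f ∧ B u = g := by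
  obtain ⟨u, hu, huniq⟩ :=
    (iterateDerivativeProdBoundary_bijective hbN hB).existsUnique (⟨f, hf⟩, g)
  refine ⟨u, ⟨u.2, iterateDerivativeProdBoundary_apply_eq_iff.mp hu⟩, ?_⟩
  rintro v ⟨hv, hsol⟩
  exact congrArg Subtype.val
    (huniq ⟨v, hv⟩ (iterateDerivativeProdBoundary_apply_eq_iff.mpr hsol))

end BoundaryValueProblem

end Polynomial

theorem tau_straight_derivatives_general
    (b N : ℕ) (hbN : b ≤ N)
    (f : ℝ[X]) (hf : f ∈ Polynomial.degreeLT ℝ (N - b))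
    (B : ℝ[X] →ₗ[ℝ] (Fin b → ℝ))
    (hB : (Matrix.of fun i j : Fin b => B (Polynomial.X ^ (j : ℕ)) i).det ≠ 0)
    (g : Fin b → ℝ) :
    ∃! u : ℝ[X], u ∈ Polynomial.degreeLT ℝ N ∧
      Polynomial.derivative^[b] u = f ∧ B u = g :=
  existsUnique_iterate_derivative_eq_and_eq hbN hf hB g

/-- **Lemma 2.1.** For `∂^b u = f` with `f ∈ Π_{N-b}` and `b`-many linear boundary
functionals `B` whose matrix on the monomials `x^0, …, x^{b-1}` is invertible,
there is a unique solution `u ∈ Π_N`. -/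
theorem tau_straight_derivatives
    (b N : ℕ) (hb : 0 < b) (hbN : b ≤ N)
    (f : ℝ[X]) (hf : f ∈ Polynomial.degreeLT ℝ (N - b))
    (B : ℝ[X] →ₗ[ℝ] (Fin b → ℝ))
    (hB : (Matrix.of fun i j : Fin b => B (Polynomial.X ^ (j : ℕ)) i).det ≠ 0)
    (g : Fin b → ℝ) :
    ∃! u : ℝ[X], u ∈ Polynomial.degreeLT ℝ N ∧
      Polynomial.derivative^[b] u = f ∧ B u = g :=
  tau_straight_derivatives_general b N hbN f hf B hB g
end

section
/- Let L be a degree-b real polynomial with L(0) ≠ 0, and let P_1, ..., P_b be polynomials of degree less than N. Define p_k ∈ Π_N by L(∂) p_k = P_k. Let B be b linear functionals such that the b×b matrix with columns B(p_1), ..., B(p_b) is invertible. Then for every f ∈ Π_N and g ∈ ℝ^b there exist a unique u ∈ Π_N and unique scalars τ_1, ..., τ_b with L(∂)u + Σ_k τ_k P_k = f and B(u) = g. -/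
/-!
Since `L(0) ≠ 0`, the operator `L(∂)` does not lower the degree, so it is injective on `ℝ[X]`
and hence bijective on the finite-dimensional space `Π_N`. If `L(∂)v = f`, injectivity turns the
equation `L(∂)u + Σ τ_k P_k = f` into `u = v - Σ τ_k p_k`, and the boundary condition becomes the
linear system `M τ = B(v) - g` whose matrix `M` has columns `B(p_k)`.
-/

open Polynomial

noncomputable def diffOp (L : ℝ[X]) (u : ℝ[X]) : ℝ[X] :=
  ∑ k ∈ Finset.range (L.natDegree + 1), L.coeff k • Polynomial.derivative^[k] u

noncomputable def diffOpLinearMap (L : ℝ[X]) : ℝ[X] →ₗ[ℝ] ℝ[X] :=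
  ∑ k ∈ Finset.range (L.natDegree + 1), L.coeff k • (derivative : ℝ[X] →ₗ[ℝ] ℝ[X]) ^ k

theorem diffOpLinearMap_apply (L u : ℝ[X]) : diffOpLinearMap L u = diffOp L u := by
  simp [diffOpLinearMap, diffOp, LinearMap.sum_apply, Module.End.pow_apply]

theorem iterate_derivative_mem_degreeLT {R : Type*} [Semiring R] {N : ℕ} {u : R[X]}
    (hu : u ∈ degreeLT R N) (k : ℕ) : derivative^[k] u ∈ degreeLT R N := by
  induction k with
  | zero => exact hu
  | succ k ih =>
    rw [Function.iterate_succ_apply']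
    exact mem_degreeLT.2 (degree_derivative_le.trans_lt (mem_degreeLT.1 ih))

theorem diffOp_mem_degreeLT (L : ℝ[X]) {N : ℕ} {u : ℝ[X]} (hu : u ∈ degreeLT ℝ N) :
    diffOp L u ∈ degreeLT ℝ N :=
  Submodule.sum_mem _ fun k _ => Submodule.smul_mem _ _ (iterate_derivative_mem_degreeLT hu k)

-- Derivatives lower the degree, so only the order-zero term of `L(∂)` reaches the top coefficient.
theorem coeff_diffOp_natDegree (L u : ℝ[X]) :
    (diffOp L u).coeff u.natDegree = L.coeff 0 * u.leadingCoeff := by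
  rw [diffOp, finsetSum_coeff, Finset.sum_eq_single 0]
  · simp only [Function.iterate_zero_apply, coeff_smul, smul_eq_mul, leadingCoeff]
  · intro k _ hk
    rw [coeff_smul, coeff_iterate_derivative,
      coeff_eq_zero_of_natDegree_lt (Nat.lt_add_of_pos_right (Nat.pos_of_ne_zero hk)),
      smul_zero, smul_zero]
  · simp

theorem diffOpLinearMap_injective {L : ℝ[X]} (hL0 : L.coeff 0 ≠ 0) :
    Function.Injective (diffOpLinearMap L) := by
  rw [← LinearMap.ker_eq_bot, LinearMap.ker_eq_bot']
  intro u hu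
  rw [diffOpLinearMap_apply] at hu
  have := coeff_diffOp_natDegree L u
  rw [hu, coeff_zero, eq_comm, mul_eq_zero] at this
  exact leadingCoeff_eq_zero.1 (this.resolve_left hL0)

theorem exists_mem_degreeLT_diffOp_eq {L : ℝ[X]} (hL0 : L.coeff 0 ≠ 0) {N : ℕ} {f : ℝ[X]}
    (hf : f ∈ degreeLT ℝ N) : ∃ v ∈ degreeLT ℝ N, diffOp L v = f := by
  have : FiniteDimensional ℝ (degreeLT ℝ N) := .of_basis (degreeLT.basis ℝ N)
  have hmaps : ∀ u ∈ degreeLT ℝ N, diffOpLinearMap L u ∈ degreeLT ℝ N := fun u hu => by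
    simpa only [diffOpLinearMap_apply] using diffOp_mem_degreeLT L hu
  obtain ⟨v, hv, hLv⟩ := (LinearMap.injOn_iff_surjOn hmaps).1
    (diffOpLinearMap_injective hL0).injOn hf
  exact ⟨v, hv, by rwa [← diffOpLinearMap_apply]⟩

theorem LinearMap.apply_add_sum_smul_eq_iff {R M M₂ ι : Type*} [Semiring R] [AddCommGroup M]
    [AddCommGroup M₂] [Module R M] [Module R M₂] [Fintype ι] {T : M →ₗ[R] M₂}
    (hT : Function.Injective T) {v : M} {f : M₂} (hv : T v = f) {p : ι → M} {P : ι → M₂}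
    (hp : ∀ k, T (p k) = P k) (u : M) (τ : ι → R) :
    T u + ∑ k, τ k • P k = f ↔ u = v - ∑ k, τ k • p k := by
  simp_rw [← hv, ← hp, ← map_smul, ← map_sum, ← map_add, hT.eq_iff, eq_sub_iff_add_eq]

theorem LinearMap.map_sum_smul_eq_mulVec {R M ι : Type*} [CommSemiring R] [AddCommMonoid M]
    [Module R M] [Fintype ι] (B : M →ₗ[R] ι → R) (p : ι → M) (τ : ι → R) :
    B (∑ k, τ k • p k) = (Matrix.of fun i j => B (p j) i).mulVec τ := by
  ext i
  simp [Matrix.mulVec, dotProduct, mul_comm]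

theorem existsUnique_map_sub_sum_smul_eq {R M ι : Type*} [CommRing R] [AddCommGroup M]
    [Module R M] [Fintype ι] [DecidableEq ι] (B : M →ₗ[R] ι → R) (p : ι → M)
    (hB : IsUnit (Matrix.of fun i j => B (p j) i).det) (v : M) (g : ι → R) :
    ∃! τ : ι → R, B (v - ∑ k, τ k • p k) = g := by
  rw [← Matrix.isUnit_iff_isUnit_det] at hB
  simp_rw [map_sub, B.map_sum_smul_eq_mulVec, sub_eq_iff_eq_add', ← sub_eq_iff_eq_add,
    eq_comm (a := B v - g)]
  exact Function.Bijective.existsUnique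
    ⟨Matrix.mulVec_injective_of_isUnit hB, Matrix.mulVec_surjective_iff_isUnit.2 hB⟩ _

theorem tau_invertible_operator_general
    (b N : ℕ) (L : ℝ[X]) (hL0 : L.coeff 0 ≠ 0)
    (P p : Fin b → ℝ[X])
    (hp : ∀ k, p k ∈ Polynomial.degreeLT ℝ N)
    (hLp : ∀ k, diffOp L (p k) = P k)
    (B : ℝ[X] →ₗ[ℝ] (Fin b → ℝ))
    (hB : (Matrix.of fun i j : Fin b => B (p j) i).det ≠ 0)
    (f : ℝ[X]) (hf : f ∈ Polynomial.degreeLT ℝ N)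
    (g : Fin b → ℝ) :
    ∃! w : ℝ[X] × (Fin b → ℝ),
      w.1 ∈ Polynomial.degreeLT ℝ N ∧
      diffOp L w.1 + ∑ k, w.2 k • P k = f ∧
      B w.1 = g := by
  obtain ⟨v, hv, hLv⟩ := exists_mem_degreeLT_diffOp_eq hL0 hf
  obtain ⟨τ, hBτ, hτ_unique⟩ := existsUnique_map_sub_sum_smul_eq B p hB.isUnit v g
  have hsol (u : ℝ[X]) (σ : Fin b → ℝ) :
      diffOp L u + ∑ k, σ k • P k = f ↔ u = v - ∑ k, σ k • p k := by
    simpa only [diffOpLinearMap_apply] using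
      LinearMap.apply_add_sum_smul_eq_iff (diffOpLinearMap_injective hL0)
        (by rwa [diffOpLinearMap_apply]) (fun k => by rw [diffOpLinearMap_apply, hLp]) u σ
  refine ⟨(v - ∑ k, τ k • p k, τ), ⟨?_, (hsol _ _).2 rfl, hBτ⟩, ?_⟩
  · exact Submodule.sub_mem _ hv (Submodule.sum_mem _ fun k _ => Submodule.smul_mem _ _ (hp k))
  · rintro ⟨u, σ⟩ ⟨-, hLu, hBu⟩
    obtain rfl := (hsol u σ).1 hLu
    obtain rfl := hτ_unique σ hBu
    rfl

/-- **Lemma 2.3.** For `L(∂)u + Σ τ_k P_k = f` with `deg L = b`, `L(0) ≠ 0`,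
`P_k ∈ Π_N`, `p_k ∈ Π_N` with `L(∂)p_k = P_k`, and boundary functionals `B` whose matrix
on the `p_k` is invertible, there is a unique solution `(u, τ)` with `u ∈ Π_N`. -/
theorem tau_invertible_operator
    (b N : ℕ) (L : ℝ[X]) (hdeg : L.natDegree = b) (hL0 : L.coeff 0 ≠ 0)
    (P p : Fin b → ℝ[X])
    (hP : ∀ k, P k ∈ Polynomial.degreeLT ℝ N)
    (hp : ∀ k, p k ∈ Polynomial.degreeLT ℝ N)
    (hLp : ∀ k, diffOp L (p k) = P k)
    (B : ℝ[X] →ₗ[ℝ] (Fin b → ℝ))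
    (hB : (Matrix.of fun i j : Fin b => B (p j) i).det ≠ 0)
    (f : ℝ[X]) (hf : f ∈ Polynomial.degreeLT ℝ N)
    (g : Fin b → ℝ) :
    ∃! w : ℝ[X] × (Fin b → ℝ),
      w.1 ∈ Polynomial.degreeLT ℝ N ∧
      diffOp L w.1 + ∑ k, w.2 k • P k = f ∧
      B w.1 = g :=
  tau_invertible_operator_general b N L hL0 P p hp hLp B hB f hf g
end
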